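/- The number of u-parking functions of length m equals (−1)^m g_m(0; u₁,...,uₘ), where g_m is the Goncarov polynomial. -/

import Mathlib

open Polynomial Finset

def IsParkingFn {m : ℕ} (u : Fin m → ℕ) (π : Fin m → ℕ) : Prop :=
  (∀ i, 0 < π i) ∧ ∃ σ : Equiv.Perm (Fin m),
    Monotone (fun i => π (σ i)) ∧ ∀ i, π (σ i) ≤ u i

lemma park_iff {m : ℕ} (u π : Fin m → ℕ) :
    IsParkingFn u π ↔ ((∀ j, 0 < π j) ∧ ∀ k : Fin m,
      (k : ℕ) + 1 ≤ (univ.filter (fun j => π j ≤ u k)).card) := by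
  constructor
  · rintro ⟨hpos, σ, hmono, hle⟩
    refine ⟨hpos, fun k => ?_⟩
    have hsub : (Finset.Iic k).image σ ⊆ univ.filter (fun j => π j ≤ u k) := by
      intro j hj
      simp only [mem_image, Finset.mem_Iic] at hj
      obtain ⟨l, hl, rfl⟩ := hj
      simp only [mem_filter, mem_univ, true_and]
      exact le_trans (hmono hl) (hle k)
    calc (k : ℕ) + 1 = (Finset.Iic k).card := (Fin.card_Iic k).symm
      _ = ((Finset.Iic k).image σ).card := (Finset.card_image_of_injective _ σ.injective).symm
      _ ≤ _ := Finset.card_le_card hsub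
  · rintro ⟨hpos, hcard⟩
    refine ⟨hpos, Tuple.sort π, Tuple.monotone_sort π, fun k => ?_⟩
    by_contra hlt
    push_neg at hlt
    have hsub : univ.filter (fun j => π j ≤ u k) ⊆ (Finset.Iio k).image (Tuple.sort π) := by
      intro j hj
      simp only [mem_filter, mem_univ, true_and] at hj
      simp only [mem_image, Finset.mem_Iio]
      refine ⟨(Tuple.sort π).symm j, ?_, by simp⟩
      by_contra hge
      push_neg at hge
      have := Tuple.monotone_sort π hge
      simp only [Function.comp_apply, Equiv.apply_symm_apply] at this
      omega
    have := Finset.card_le_card hsub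
    have h2 : ((Finset.Iio k).image (Tuple.sort π)).card ≤ (k : ℕ) := by
      rw [Finset.card_image_of_injective _ (Tuple.sort π).injective, Fin.card_Iio]
    have := hcard k
    omega

lemma park_le_sup {m : ℕ} {u π : Fin m → ℕ} (h : IsParkingFn u π) (j : Fin m) :
    π j ≤ univ.sup u := by
  obtain ⟨-, σ, -, hle⟩ := h
  have : π (σ (σ.symm j)) ≤ u (σ.symm j) := hle _
  simpa using this.trans (Finset.le_sup (mem_univ _))

noncomputable def pfFinset (m : ℕ) (u : Fin m → ℕ) : Finset (Fin m → ℕ) :=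
  @Finset.filter _ (fun π => IsParkingFn u π) (Classical.decPred _)
    (Fintype.piFinset (fun _ => Finset.Icc 1 (univ.sup u)))

noncomputable def pcount (m : ℕ) (u : Fin m → ℕ) : ℕ := (pfFinset m u).card

lemma ncard_eq_pcount (m : ℕ) (u : Fin m → ℕ) :
    Set.ncard {π : Fin m → ℕ | IsParkingFn u π} = pcount m u := by
  classical
  have : {π : Fin m → ℕ | IsParkingFn u π} = ↑(pfFinset m u) := by
    ext π
    simp only [pfFinset, Set.mem_setOf_eq, coe_filter, Fintype.mem_piFinset,
      Finset.mem_Icc]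
    constructor
    · intro h
      exact ⟨fun j => ⟨h.1 j, park_le_sup h j⟩, h⟩
    · exact fun h => h.2
  rw [this, Set.ncard_coe_finset]; rfl

lemma pcount_zero (u : Fin 0 → ℕ) : pcount 0 u = 1 := by
  classical
  rw [pcount, pfFinset]
  rw [Finset.card_eq_one]
  refine ⟨fun j => j.elim0, ?_⟩
  ext π
  simp only [Finset.mem_filter, Fintype.mem_piFinset, Finset.mem_singleton]
  constructor
  · intro _; funext j; exact j.elim0
  · rintro rfl
    refine ⟨fun j => j.elim0, fun j => j.elim0, 1, fun a => a.elim0, fun j => j.elim0⟩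

section B
variable {m : ℕ}

def ext0 (u : Fin m → ℕ) : ℕ → ℕ := fun k => if h : k < m then u ⟨k, h⟩ else 0

def wth (u : Fin m → ℕ) : ℕ → ℕ := fun l => match l with
  | 0 => 0
  | k+1 => ext0 u k

noncomputable def cnt (u : Fin m → ℕ) (π : Fin m → ℕ) (l : ℕ) : ℕ :=
  (univ.filter (fun j => π j ≤ wth u l)).card

def ok (u : Fin m → ℕ) (π : Fin m → ℕ) (k : ℕ) : Prop :=
  ∀ l, l ≤ k → l ≤ cnt u π l

noncomputable instance (u π : Fin m → ℕ) : DecidablePred (ok u π) :=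
  fun _ => Classical.dec _

noncomputable def idx (u : Fin m → ℕ) (π : Fin m → ℕ) : ℕ :=
  Nat.findGreatest (ok u π) m

lemma ok_zero (u π : Fin m → ℕ) : ok u π 0 := by
  intro l hl; omega

lemma ok_mono (u π : Fin m → ℕ) {k k' : ℕ} (h : k' ≤ k) (hk : ok u π k) : ok u π k' :=
  fun l hl => hk l (hl.trans h)

lemma wth_mono (u : Fin m → ℕ) (hu : StrictMono u) {l l' : ℕ} (h : l ≤ l') (h' : l' ≤ m) :
    wth u l ≤ wth u l' := by
  match l, l' with
  | 0, _ => exact Nat.zero_le _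
  | k+1, k'+1 =>
    simp only [wth, ext0]
    rw [dif_pos (by omega), dif_pos (by omega)]
    exact hu.monotone (by simp [Fin.le_def]; omega)

lemma cnt_mono (u : Fin m → ℕ) (hu : StrictMono u) (π : Fin m → ℕ) {l l' : ℕ}
    (h : l ≤ l') (h' : l' ≤ m) : cnt u π l ≤ cnt u π l' := by
  apply Finset.card_le_card
  intro j hj
  simp only [mem_filter, mem_univ, true_and] at hj ⊢
  exact hj.trans (wth_mono u hu h h')

lemma idx_le (u π : Fin m → ℕ) : idx u π ≤ m := Nat.findGreatest_le m

lemma ok_idx (u π : Fin m → ℕ) : ok u π (idx u π) := by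
  exact Nat.findGreatest_spec (Nat.zero_le m) (ok_zero u π)

lemma le_idx (u π : Fin m → ℕ) {k : ℕ} (hk : k ≤ m) (h : ok u π k) : k ≤ idx u π :=
  Nat.le_findGreatest hk h

-- parking iff ok m
lemma park_iff_ok (u π : Fin m → ℕ) :
    IsParkingFn u π ↔ ((∀ j, 0 < π j) ∧ ok u π m) := by
  rw [park_iff]
  constructor
  · rintro ⟨hpos, h⟩
    refine ⟨hpos, fun l hl => ?_⟩
    match l with
    | 0 => omega
    | k+1 =>
      have hk : k < m := by omega
      have := h ⟨k, hk⟩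
      simpa [cnt, wth, ext0, dif_pos hk] using this
  · rintro ⟨hpos, h⟩
    refine ⟨hpos, fun k => ?_⟩
    have := h (k + 1) (by omega)
    simpa [cnt, wth, ext0, dif_pos k.isLt] using this

end B
section C
variable {m : ℕ}

lemma mem_pfFinset_iff {i : ℕ} (u' : Fin i → ℕ) (f : Fin i → ℕ) :
    f ∈ pfFinset i u' ↔ IsParkingFn u' f := by
  classical
  simp only [pfFinset, Finset.mem_filter, Fintype.mem_piFinset, Finset.mem_Icc]
  constructor
  · exact fun h => h.2
  · intro h
    exact ⟨fun j => ⟨h.1 j, park_le_sup h j⟩, h⟩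

lemma card_filter_comp {i : ℕ} (S : Finset (Fin m)) (e : Fin i ≃ {x // x ∈ S})
    (π : Fin m → ℕ) (c : ℕ) :
    (univ.filter (fun k : Fin i => π ((e k) : Fin m) ≤ c)).card
      = (S.filter (fun j => π j ≤ c)).card := by
  apply Finset.card_bij (fun k _ => ((e k : {x // x ∈ S}) : Fin m))
  · intro k hk
    simp only [mem_filter, mem_univ, true_and] at hk ⊢
    exact ⟨(e k).2, hk⟩
  · intro a _ b _ hab
    exact e.injective (Subtype.ext hab)
  · intro a ha
    simp only [mem_filter] at ha
    exact ⟨e.symm ⟨a, ha.1⟩, by simpa using ha.2, by simp⟩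

lemma wth_pre {i : ℕ} (u : Fin m → ℕ) (hi : i ≤ m) {l : ℕ} (hl : l ≤ i) :
    wth (fun j : Fin i => ext0 u (j : ℕ)) l = wth u l := by
  match l with
  | 0 => rfl
  | k+1 =>
    simp only [wth, ext0]
    rw [dif_pos (show k < i by omega), dif_pos (show k < m by omega)]

lemma cnt_le (u π : Fin m → ℕ) (l : ℕ) : cnt u π l ≤ m := by
  simpa [cnt] using Finset.card_le_card (Finset.filter_subset _ (univ : Finset (Fin m)))

lemma card_S (u : Fin m → ℕ) (hu : StrictMono u) (π : Fin m → ℕ) :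
    cnt u π (idx u π) = idx u π := by
  set i := idx u π with hi
  have h1 : i ≤ cnt u π i := ok_idx u π i le_rfl
  have him : i ≤ m := idx_le u π
  rcases eq_or_lt_of_le him with h | h
  · have := cnt_le u π i
    omega
  · by_contra hne
    have hgt : i + 1 ≤ cnt u π i := by omega
    have : ok u π (i+1) := by
      intro l hl
      rcases Nat.lt_or_ge l (i+1) with hl' | hl'
      · exact ok_idx u π l (by omega)
      · have hl2 : l = i + 1 := by omega
        subst hl2
        exact hgt.trans (cnt_mono u hu π (by omega) (by omega))

    have := le_idx u π (by omega) this
    omega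

noncomputable def classFinset (u : Fin m → ℕ) (N i : ℕ) (S : Finset (Fin m)) :
    Finset (Fin m → ℕ) :=
  @Finset.filter _
    (fun π => idx u π = i ∧ univ.filter (fun j => π j ≤ wth u i) = S)
    (Classical.decPred _)
    (Fintype.piFinset fun _ => Finset.Icc 1 N)

lemma mem_classFinset {u : Fin m → ℕ} {N i : ℕ} {S : Finset (Fin m)} {π : Fin m → ℕ} :
    π ∈ classFinset u N i S ↔
      ((∀ j, 1 ≤ π j ∧ π j ≤ N) ∧ idx u π = i ∧
        univ.filter (fun j => π j ≤ wth u i) = S) := by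
  simp only [classFinset, Finset.mem_filter, Fintype.mem_piFinset, Finset.mem_Icc]

lemma class_out {u : Fin m → ℕ} (hu : StrictMono u) {N i : ℕ} {S : Finset (Fin m)}
    {π : Fin m → ℕ} (hπ : π ∈ classFinset u N i S) (him : i < m) :
    ∀ j, j ∉ S → ext0 u i < π j := by
  rw [mem_classFinset] at hπ
  obtain ⟨hB, hidx, hS⟩ := hπ
  have hok : ok u π i := by rw [← hidx]; exact ok_idx u π
  have hnok : ¬ ok u π (i+1) := by
    intro h
    have := le_idx u π (by omega) h
    omega
  have hcnt : cnt u π (i+1) ≤ i := by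
    by_contra hc
    push_neg at hc
    apply hnok
    intro l hl
    rcases Nat.lt_or_ge l (i+1) with hl' | hl'
    · exact hok l (by omega)
    · have hl2 : l = i+1 := by omega
      subst hl2
      omega
  have hsub : S ⊆ univ.filter (fun j => π j ≤ wth u (i+1)) := by
    intro j hj
    rw [← hS] at hj
    simp only [mem_filter, mem_univ, true_and] at hj ⊢
    exact hj.trans (wth_mono u hu (by omega) (by omega))
  have hScard : S.card = cnt u π i := by rw [← hS]; rfl
  have hcard_i : cnt u π i ≤ cnt u π (i+1) := cnt_mono u hu π (by omega) (by omega)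
  have hoki : i ≤ cnt u π i := hok i le_rfl
  have heq : univ.filter (fun j => π j ≤ wth u (i+1)) = S := by
    apply (Finset.eq_of_subset_of_card_le hsub ?_).symm
    show cnt u π (i+1) ≤ S.card
    omega
  intro j hj
  rw [← heq] at hj
  simp only [mem_filter, mem_univ, true_and, not_le] at hj
  exact hj

end C
section D
variable {m : ℕ}

lemma class_card {u : Fin m → ℕ} (hu : StrictMono u) {N i : ℕ} (hN : ∀ j, u j ≤ N)
    {S : Finset (Fin m)} (hi : i ≤ m) (hS : S.card = i) :
    (classFinset u N i S).card
      = pcount i (fun j : Fin i => ext0 u (j : ℕ)) * (N - ext0 u i) ^ (m - i) := by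
  classical
  set pre : Fin i → ℕ := fun j => ext0 u (j : ℕ) with hpre
  have e : Fin i ≃ {x // x ∈ S} :=
    (Fintype.equivFinOfCardEq (by rw [Fintype.card_coe, hS])).symm
  -- auxiliary facts
  have hwiN : wth u i ≤ N := by
    match i, hi with
    | 0, _ => exact Nat.zero_le N
    | k+1, hik =>
      show ext0 u k ≤ N
      rw [ext0, dif_pos (show k < m by omega)]
      exact hN _
  have hpre_le : ∀ j : Fin i, pre j ≤ wth u i := by
    intro j
    have hipos : 0 < i := j.pos
    have hj : (j : ℕ) < i := j.isLt
    obtain ⟨k, rfl⟩ : ∃ k, i = k + 1 := ⟨i - 1, by omega⟩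
    show pre j ≤ ext0 u k
    simp only [hpre, ext0]
    rw [dif_pos (show (j:ℕ) < m by omega), dif_pos (show k < m by omega)]
    exact hu.monotone (by simp [Fin.le_def]; omega)
  have hwle : i < m → wth u i ≤ ext0 u i := by
    intro him
    exact wth_mono u hu (Nat.le_succ i) (by omega) |>.trans (le_of_eq rfl)
  -- the bijection
  have hcardT : (classFinset u N i S).card =
      ((pfFinset i pre) ×ˢ
        (Fintype.piFinset fun _ : {x // x ∈ Sᶜ} => Finset.Ioc (ext0 u i) N)).card := by
    apply Finset.card_bij'
      (i := fun π _ => ((fun k => π (e k)), (fun j : {x // x ∈ Sᶜ} => π j.1)))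
      (j := fun p _ => fun j =>
        if hj : j ∈ S then p.1 (e.symm ⟨j, hj⟩) else p.2 ⟨j, Finset.mem_compl.mpr hj⟩)
    · -- forward membership
      intro π hπ
      have hπ' := hπ
      rw [mem_classFinset] at hπ'
      obtain ⟨hB, hidx, hSeq⟩ := hπ'
      have hok : ok u π i := by rw [← hidx]; exact ok_idx u π
      rw [Finset.mem_product]
      constructor
      · rw [mem_pfFinset_iff, park_iff_ok]
        refine ⟨fun k => (hB _).1, fun l hl => ?_⟩
        show l ≤ cnt pre (fun k => π (e k)) l
        have h1 : cnt pre (fun k => π (e k)) l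
            = (S.filter (fun j => π j ≤ wth u l)).card := by
          rw [cnt]
          rw [wth_pre u hi hl]
          exact card_filter_comp S e π (wth u l)
        have h2 : S.filter (fun j => π j ≤ wth u l)
            = univ.filter (fun j => π j ≤ wth u l) := by
          ext j
          simp only [mem_filter, mem_univ, true_and]
          constructor
          · exact fun h => h.2
          · intro h
            refine ⟨?_, h⟩
            rw [← hSeq]
            simp only [mem_filter, mem_univ, true_and]
            exact h.trans (wth_mono u hu hl hi)
        rw [h1, h2]
        exact hok l hl
      · rw [Fintype.mem_piFinset]
        intro j
        rw [Finset.mem_Ioc]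
        refine ⟨?_, (hB _).2⟩
        rcases eq_or_lt_of_le hi with hieq | him
        · exfalso
          have hSu : S = univ := Finset.eq_univ_of_card S (by rw [hS, hieq]; simp)
          exact (Finset.mem_compl.mp j.2) (Finset.eq_univ_iff_forall.mp hSu _)
        · exact class_out hu hπ him j.1 (Finset.mem_compl.mp j.2)
    · -- backward membership
      intro p hp
      rw [Finset.mem_product, mem_pfFinset_iff, Fintype.mem_piFinset] at hp
      obtain ⟨hf, hh⟩ := hp
      have hfpos : ∀ k, 0 < p.1 k := hf.1
      have hfle : ∀ k, p.1 k ≤ wth u i := fun k =>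
        (park_le_sup hf k).trans (Finset.sup_le fun j _ => hpre_le j)
      have hhIoc : ∀ j, ext0 u i < p.2 j ∧ p.2 j ≤ N := by
        intro j; have := hh j; rw [Finset.mem_Ioc] at this; exact this
      set ψ : Fin m → ℕ := fun j =>
        if hj : j ∈ S then p.1 (e.symm ⟨j, hj⟩) else p.2 ⟨j, Finset.mem_compl.mpr hj⟩
        with hψ
      have hψe : ∀ k : Fin i, ψ (e k) = p.1 k := by
        intro k
        have hjk : ((e k : {x // x ∈ S}) : Fin m) ∈ S := (e k).2
        simp only [hψ]
        rw [dif_pos hjk, Subtype.coe_eta, e.symm_apply_apply]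
      have hψout : ∀ j (hj : j ∉ S), ψ j = p.2 ⟨j, Finset.mem_compl.mpr hj⟩ := by
        intro j hj
        simp only [hψ]
        rw [dif_neg hj]
      have hψB : ∀ j, 1 ≤ ψ j ∧ ψ j ≤ N := by
        intro j
        by_cases hj : j ∈ S
        · simp only [hψ]; rw [dif_pos hj]
          exact ⟨hfpos _, (hfle _).trans hwiN⟩
        · simp only [hψ]; rw [dif_neg hj]
          have := hhIoc ⟨j, Finset.mem_compl.mpr hj⟩
          omega
      have hSuniv : i = m → S = univ := by
        intro hie; exact Finset.eq_univ_of_card S (by rw [hS, hie]; simp)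
      have hψgt : ∀ j, j ∉ S → ext0 u i < ψ j := by
        intro j hj
        rw [hψout j hj]
        exact (hhIoc _).1
      have hSeq : univ.filter (fun j => ψ j ≤ wth u i) = S := by
        ext j
        simp only [mem_filter, mem_univ, true_and]
        constructor
        · intro h
          by_contra hj
          rcases eq_or_lt_of_le hi with hieq | him
          · exact hj (Finset.eq_univ_iff_forall.mp (hSuniv hieq) _)
          · have := hψgt j hj
            have := hwle him
            omega
        · intro hj
          simp only [hψ]; rw [dif_pos hj]
          exact hfle _
      -- ok i for ψ
      have hokf : ok pre p.1 i := ((park_iff_ok pre p.1).mp hf).2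
      have hoki : ok u ψ i := by
        intro l hl
        have h1 : cnt pre p.1 l = (S.filter (fun j => ψ j ≤ wth u l)).card := by
          rw [cnt, wth_pre u hi hl]
          have := card_filter_comp S e ψ (wth u l)
          rw [← this]
          congr 1
          apply Finset.filter_congr
          intro k _
          rw [hψe k]
        have h2 : (S.filter (fun j => ψ j ≤ wth u l)).card ≤ cnt u ψ l := by
          apply Finset.card_le_card
          intro j hj
          simp only [mem_filter, mem_univ, true_and] at hj ⊢
          exact hj.2
        have := hokf l hl
        omega
      have hidx : idx u ψ = i := by
        have hge : i ≤ idx u ψ := le_idx u ψ hi hoki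
        rcases eq_or_lt_of_le hi with hieq | him
        · have := idx_le u ψ; omega
        · by_contra hne
          have hgt : i + 1 ≤ idx u ψ := by omega
          have hok1 : ok u ψ (i+1) := ok_mono u ψ hgt (ok_idx u ψ)
          have hle1 : i + 1 ≤ cnt u ψ (i+1) := hok1 (i+1) le_rfl
          have : cnt u ψ (i+1) ≤ S.card := by
            apply Finset.card_le_card
            intro j hj
            simp only [mem_filter, mem_univ, true_and] at hj
            by_contra hjS
            have := hψgt j hjS
            have : wth u (i+1) = ext0 u i := rfl
            omega
          omega
      rw [mem_classFinset]
      exact ⟨hψB, hidx, hSeq⟩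
    · -- left inverse
      intro π hπ
      funext j
      by_cases hj : j ∈ S
      · simp only [dif_pos hj]
        rw [e.apply_symm_apply]
      · simp only [dif_neg hj]
    · -- right inverse
      intro p hp
      ext k
      · simp only
        have hjk : ((e k : {x // x ∈ S}) : Fin m) ∈ S := (e k).2
        rw [dif_pos hjk, Subtype.coe_eta, e.symm_apply_apply]
      · simp only
        rw [dif_neg (Finset.mem_compl.mp k.2)]
  rw [hcardT, Finset.card_product, Fintype.card_piFinset]
  simp only [Nat.card_Ioc, Finset.prod_const, Finset.card_univ, Fintype.card_coe,
    Finset.card_compl, Fintype.card_fin, hS]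
  rfl

end D
section E
lemma key_count (m N : ℕ) (u : Fin m → ℕ) (hu : StrictMono u) (hN : ∀ j, u j ≤ N) :
    N ^ m = ∑ i ∈ Finset.range (m+1),
      m.choose i * pcount i (fun j : Fin i => ext0 u (j : ℕ)) * (N - ext0 u i) ^ (m - i) := by
  classical
  have hcardB : (Fintype.piFinset fun _ : Fin m => Finset.Icc 1 N).card = N ^ m := by
    rw [Fintype.card_piFinset]
    simp [Nat.card_Icc]
  rw [← hcardB]
  set B : Finset (Fin m → ℕ) := Fintype.piFinset fun _ => Finset.Icc 1 N with hB
  rw [Finset.card_eq_sum_card_fiberwise (f := fun π => idx u π)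
    (t := Finset.range (m+1)) (fun π _ => Finset.mem_range.mpr (Nat.lt_succ_of_le (idx_le u π)))]
  apply Finset.sum_congr rfl
  intro i hi
  rw [Finset.mem_range] at hi
  have him : i ≤ m := by omega
  rw [Finset.card_eq_sum_card_fiberwise
    (f := fun π => univ.filter (fun j => π j ≤ wth u i))
    (t := Finset.powersetCard i univ) (fun π hπ => ?_)]
  · rw [Finset.sum_congr rfl (g := fun _ =>
      pcount i (fun j : Fin i => ext0 u (j : ℕ)) * (N - ext0 u i) ^ (m - i))
      (fun S hS => ?_)]
    · rw [Finset.sum_const, Finset.card_powersetCard, Finset.card_univ, Fintype.card_fin,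
        smul_eq_mul, mul_assoc]
    · have hScard : S.card = i := (Finset.mem_powersetCard.mp hS).2
      have hclass : (B.filter (fun π => idx u π = i)).filter
          (fun π => univ.filter (fun j => π j ≤ wth u i) = S) = classFinset u N i S := by
        ext π
        simp only [Finset.mem_filter, hB, Fintype.mem_piFinset, Finset.mem_Icc,
          mem_classFinset]
        tauto
      rw [hclass, class_card hu hN him hScard]
  · -- fiber lands in powersetCard
    rw [Finset.mem_coe, Finset.mem_filter] at hπ
    rw [Finset.mem_coe, Finset.mem_powersetCard]
    refine ⟨Finset.subset_univ _, ?_⟩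
    have := card_S u hu π
    rw [hπ.2] at this
    exact this
end E
section G

lemma poly_eq_of_deriv_eq {p q : Polynomial ℝ} (hd : derivative p = derivative q) {a : ℝ}
    (he : p.eval a = q.eval a) : p = q := by
  have h1 : derivative (p - q) = 0 := by rw [derivative_sub, hd, sub_self]
  have hc := Polynomial.eq_C_of_derivative_eq_zero h1
  have h2 := congrArg (Polynomial.eval a) hc
  rw [eval_sub, he, sub_self, eval_C] at h2
  have : p - q = 0 := by rw [hc, ← h2, map_zero]
  exact sub_eq_zero.mp this

lemma gexp (g : List ℝ → Polynomial ℝ) (h0 : g [] = 1)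
    (hD : ∀ (a : ℝ) (as : List ℝ),
      derivative (g (a :: as)) = ((as.length + 1 : ℕ) : ℝ) • g as)
    (hE : ∀ (a : ℝ) (as : List ℝ), (g (a :: as)).eval a = 0) :
    ∀ as : List ℝ, (X : Polynomial ℝ) ^ as.length
      = ∑ i ∈ Finset.range (as.length + 1),
          ((as.length.choose i : ℝ) * (as.getD i 0) ^ (as.length - i)) • g (as.take i) := by
  intro as
  induction as with
  | nil => simp [h0]
  | cons a as ih =>
    have hlen : (a :: as).length = as.length + 1 := rfl
    apply poly_eq_of_deriv_eq (a := a)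
    · simp only [hlen]
      have hstep : ∀ j ∈ Finset.range (as.length + 1),
          derivative ((((as.length + 1).choose (j+1) : ℝ) *
              ((a::as).getD (j+1) 0) ^ (as.length + 1 - (j+1))) • g ((a::as).take (j+1)))
            = ((as.length + 1 : ℕ) : ℝ) •
              (((as.length.choose j : ℝ) * (as.getD j 0) ^ (as.length - j)) • g (as.take j)) := by
        intro j hj
        rw [Finset.mem_range] at hj
        have htake : (a :: as).take (j+1) = a :: as.take j := rfl
        rw [htake, derivative_smul, hD a (as.take j)]
        rw [List.length_take, min_eq_left (by omega)]
        rw [smul_smul, smul_smul]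
        congr 1
        have hgd : (a::as).getD (j+1) 0 = as.getD j 0 := rfl
        have hexp : as.length + 1 - (j+1) = as.length - j := by omega
        rw [hgd, hexp]
        have hch : (as.length+1).choose (j+1) * (j+1) = (as.length + 1) * as.length.choose j := by
          have := Nat.add_one_mul_choose_eq as.length j
          simpa [Nat.succ_eq_add_one] using this.symm
        have hchR : (((as.length+1).choose (j+1) : ℕ) : ℝ) * ((j+1 : ℕ) : ℝ)
            = ((as.length + 1 : ℕ) : ℝ) * ((as.length.choose j : ℕ) : ℝ) := by
          exact_mod_cast congrArg (Nat.cast : ℕ → ℝ) hch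
        push_cast at hchR ⊢
        linear_combination (as.getD j 0 ^ (as.length - j)) * hchR
      rw [map_sum, Finset.sum_range_succ']
      rw [Finset.sum_congr rfl hstep]
      have h00 : derivative ((((as.length + 1).choose 0 : ℝ) *
          ((a::as).getD 0 0) ^ (as.length + 1 - 0)) • g ((a::as).take 0)) = 0 := by
        rw [List.take_zero, h0, derivative_smul, derivative_one, smul_zero]
      rw [h00, add_zero, ← Finset.smul_sum, ← ih]
      rw [derivative_X_pow]
      rw [Polynomial.smul_eq_C_mul]
      simp
    · simp only [hlen]
      rw [eval_pow, eval_X, eval_finset_sum, Finset.sum_range_succ']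
      have hz : ∀ j ∈ Finset.range (as.length + 1),
          Polynomial.eval a ((((as.length + 1).choose (j+1) : ℝ) *
              ((a::as).getD (j+1) 0) ^ (as.length + 1 - (j+1))) • g ((a::as).take (j+1))) = 0 := by
        intro j hj
        have htake : (a :: as).take (j+1) = a :: as.take j := rfl
        rw [htake, eval_smul, hE a (as.take j), smul_zero]
      rw [Finset.sum_congr rfl hz, Finset.sum_const, smul_zero, zero_add]
      rw [List.take_zero, h0, eval_smul]
      simp

end G
section H

lemma count_zero_id (m : ℕ) (hm : 0 < m) (u : Fin m → ℕ) (hu : StrictMono u) :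
    (0:ℝ) = ∑ i ∈ Finset.range (m+1), (m.choose i : ℝ) *
      (pcount i (fun j : Fin i => ext0 u (j:ℕ)) : ℝ) * (0 - (ext0 u i : ℝ)) ^ (m - i) := by
  classical
  set M0 : ℕ := univ.sup u with hM0
  have hext_le : ∀ i, ext0 u i ≤ M0 := by
    intro i
    rw [ext0]
    split
    · exact Finset.le_sup (Finset.mem_univ _)
    · exact Nat.zero_le _
  set q : Polynomial ℝ := ∑ i ∈ Finset.range (m+1),
      Polynomial.C ((m.choose i : ℝ) * (pcount i (fun j : Fin i => ext0 u (j:ℕ)) : ℝ)) *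
        (X - Polynomial.C ((ext0 u i : ℕ) : ℝ)) ^ (m - i) with hq
  have hqeval : ∀ x : ℝ, q.eval x = ∑ i ∈ Finset.range (m+1), (m.choose i : ℝ) *
      (pcount i (fun j : Fin i => ext0 u (j:ℕ)) : ℝ) * (x - (ext0 u i : ℝ)) ^ (m - i) := by
    intro x
    rw [hq, eval_finset_sum]
    apply Finset.sum_congr rfl
    intro i _
    rw [eval_mul, eval_C, eval_pow, eval_sub, eval_X, eval_C]
  have hroot : ∀ k : ℕ, ((X : Polynomial ℝ) ^ m - q).IsRoot ((M0 + k : ℕ) : ℝ) := by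
    intro k
    set N := M0 + k with hN
    have hNu : ∀ j, u j ≤ N := fun j => le_trans (Finset.le_sup (Finset.mem_univ _)) (by omega)
    have hkey := key_count m N u hu hNu
    rw [Polynomial.IsRoot, eval_sub, eval_pow, eval_X, hqeval, sub_eq_zero]
    have hcast : ∀ i ∈ Finset.range (m+1),
        (m.choose i : ℝ) * (pcount i (fun j : Fin i => ext0 u (j:ℕ)) : ℝ) *
          (((N:ℕ):ℝ) - ((ext0 u i : ℕ):ℝ)) ^ (m - i)
        = ((m.choose i * pcount i (fun j : Fin i => ext0 u (j:ℕ)) *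
            (N - ext0 u i) ^ (m - i) : ℕ) : ℝ) := by
      intro i _
      push_cast [Nat.cast_sub (le_trans (hext_le i) (show M0 ≤ N by omega))]
      ring
    rw [Finset.sum_congr rfl hcast, ← Nat.cast_sum, ← hkey]
    norm_num
  have hp0 : (X : Polynomial ℝ) ^ m - q = 0 := by
    apply Polynomial.eq_zero_of_infinite_isRoot
    apply Set.infinite_of_injective_forall_mem
      (f := fun k : ℕ => ((M0 + k : ℕ) : ℝ))
    · intro a b hab
      simp only [Nat.cast_inj] at hab
      omega
    · intro k
      exact hroot k
  have := congrArg (Polynomial.eval (0:ℝ)) hp0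
  rw [eval_sub, eval_pow, eval_X, Polynomial.eval_zero, hqeval, sub_eq_zero] at this
  rw [← this, zero_pow (by omega)]

lemma main_formula (g : List ℝ → Polynomial ℝ) (h0 : g [] = 1)
    (hD : ∀ (a : ℝ) (as : List ℝ),
      derivative (g (a :: as)) = ((as.length + 1 : ℕ) : ℝ) • g as)
    (hE : ∀ (a : ℝ) (as : List ℝ), (g (a :: as)).eval a = 0) :
    ∀ m : ℕ, ∀ u : Fin m → ℕ, StrictMono u → (∀ i, 0 < u i) →
      (pcount m u : ℝ)
        = (-1)^m * (g (List.map (fun k : ℕ => (k : ℝ)) (List.ofFn u))).eval 0 := by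
  intro m
  induction m using Nat.strong_induction_on with
  | _ m IH =>
    intro u hu hupos
    rcases Nat.eq_zero_or_pos m with rfl | hm
    · have h1 : (List.ofFn u) = [] := by simp
      rw [h1, List.map_nil, h0, pcount_zero]
      norm_num
    · set as : List ℝ := List.map (fun k : ℕ => (k : ℝ)) (List.ofFn u) with has
      have hlen : as.length = m := by
        rw [has, List.length_map, List.length_ofFn]
      have hgetD : ∀ i, i < m → as.getD i 0 = ((ext0 u i : ℕ) : ℝ) := by
        intro i him
        have hil : i < as.length := by omega
        rw [List.getD_eq_getElem as 0 hil]
        simp only [has, List.getElem_map, List.getElem_ofFn, ext0, dif_pos him]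
      have htake : ∀ i, i ≤ m →
          as.take i = List.map (fun k : ℕ => (k : ℝ))
            (List.ofFn (fun j : Fin i => ext0 u (j:ℕ))) := by
        intro i him
        apply List.ext_getElem
        · simp only [List.length_take, hlen, List.length_map, List.length_ofFn]
          omega
        · intro j h1 h2
          have hjl : j < i := by
            simpa only [List.length_map, List.length_ofFn] using h2
          have hjm : j < m := by omega
          simp only [List.getElem_take, has, List.getElem_map, List.getElem_ofFn, ext0,
            dif_pos hjm]
      -- the Goncarov identity evaluated at 0
      have hB0 := (congrArg (Polynomial.eval (0:ℝ)) (gexp g h0 hD hE as)).symm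
      rw [eval_pow, eval_X, eval_finset_sum, hlen, zero_pow (by omega)] at hB0
      have hBstep : ∀ i ∈ Finset.range (m+1),
          Polynomial.eval 0 (((m.choose i : ℝ) * (as.getD i 0) ^ (m - i)) • g (as.take i))
            = (m.choose i : ℝ) * ((ext0 u i : ℕ) : ℝ) ^ (m - i) * (g (as.take i)).eval 0 := by
        intro i hi
        rw [Finset.mem_range] at hi
        rw [eval_smul, smul_eq_mul]
        rcases Nat.lt_or_ge i m with him | him
        · rw [hgetD i him]
        · have : i = m := by omega
          subst this
          rw [Nat.sub_self, pow_zero, pow_zero]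
      have hB : (∑ i ∈ Finset.range (m+1),
          (m.choose i : ℝ) * ((ext0 u i : ℕ) : ℝ) ^ (m - i) * (g (as.take i)).eval 0) = 0 :=
        ((Finset.sum_congr rfl hBstep).symm).trans hB0
      have hA := count_zero_id m hm u hu
      have hA' : (0:ℝ) = ∑ i ∈ Finset.range (m+1),
          (m.choose i : ℝ) * (pcount i (fun j : Fin i => ext0 u (j:ℕ)) : ℝ) *
            ((-1:ℝ) ^ (m-i) * ((ext0 u i : ℕ):ℝ) ^ (m - i)) := by
        rw [hA]
        apply Finset.sum_congr rfl
        intro i _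
        rw [zero_sub, neg_pow]
      have hA'' : (0:ℝ) = ∑ i ∈ Finset.range (m+1),
          (m.choose i : ℝ) * ((ext0 u i : ℕ):ℝ) ^ (m - i) *
            ((-1:ℝ) ^ i * (pcount i (fun j : Fin i => ext0 u (j:ℕ)) : ℝ)) := by
        have h2 := congrArg (fun x => ((-1:ℝ) ^ m) * x) hA'
        simp only [mul_zero] at h2
        rw [h2, Finset.mul_sum]
        apply Finset.sum_congr rfl
        intro i hi
        rw [Finset.mem_range] at hi
        have hsgn : (-1:ℝ) ^ m * (-1:ℝ) ^ (m - i) = (-1:ℝ) ^ i := by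
          rw [← pow_add]
          have h3 : m + (m - i) = 2 * (m - i) + i := by omega
          rw [h3, pow_add, pow_mul]
          norm_num
        calc (-1:ℝ) ^ m * ((m.choose i : ℝ) * (pcount i (fun j : Fin i => ext0 u (j:ℕ)) : ℝ) *
              ((-1:ℝ) ^ (m-i) * ((ext0 u i : ℕ):ℝ) ^ (m - i)))
            = ((-1:ℝ) ^ m * (-1:ℝ) ^ (m - i)) * ((m.choose i : ℝ) *
              (pcount i (fun j : Fin i => ext0 u (j:ℕ)) : ℝ) * ((ext0 u i : ℕ):ℝ) ^ (m - i)) := by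
              ring
          _ = _ := by rw [hsgn]; ring
      have hIH : ∀ i, i < m → (-1:ℝ) ^ i * (pcount i (fun j : Fin i => ext0 u (j:ℕ)) : ℝ)
          = (g (as.take i)).eval 0 := by
        intro i him
        have hpre_mono : StrictMono (fun j : Fin i => ext0 u (j:ℕ)) := by
          intro a b hab
          simp only [ext0]
          rw [dif_pos (show (a:ℕ) < m by omega), dif_pos (show (b:ℕ) < m by omega)]
          have hab' : (a:ℕ) < (b:ℕ) := hab
          exact hu hab'
        have hpre_pos : ∀ j : Fin i, 0 < ext0 u (j:ℕ) := by
          intro j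
          simp only [ext0]
          rw [dif_pos (show (j:ℕ) < m by omega)]
          exact hupos _
        have h4 := IH i him (fun j : Fin i => ext0 u (j:ℕ)) hpre_mono hpre_pos
        rw [← htake i (by omega)] at h4
        rw [h4]
        have hsq : (-1:ℝ) ^ i * (-1:ℝ) ^ i = 1 := by
          rw [← pow_add]
          exact Even.neg_one_pow ⟨i, rfl⟩
        rw [← mul_assoc, hsq, one_mul]
      rw [Finset.sum_range_succ] at hA''
      rw [Finset.sum_range_succ] at hB
      have hlast_take : as.take m = as := by
        conv_lhs => rw [← hlen]
        exact List.take_length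
      have hSeq : ∑ i ∈ Finset.range m, (m.choose i : ℝ) * ((ext0 u i : ℕ):ℝ) ^ (m - i) *
            ((-1:ℝ) ^ i * (pcount i (fun j : Fin i => ext0 u (j:ℕ)) : ℝ))
          = ∑ i ∈ Finset.range m, (m.choose i : ℝ) * ((ext0 u i : ℕ):ℝ) ^ (m - i) *
            (g (as.take i)).eval 0 := by
        apply Finset.sum_congr rfl
        intro i hi
        rw [Finset.mem_range] at hi
        rw [hIH i hi]
      rw [hSeq] at hA''
      rw [hlast_take] at hB
      rw [Nat.choose_self, Nat.sub_self, pow_zero] at hA'' hB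
      norm_num at hA'' hB
      have hueq : (fun j : Fin m => ext0 u (j:ℕ)) = u := by
        funext j
        simp only [ext0]
        rw [dif_pos j.isLt]
      rw [hueq] at hA''
      have hPG : (-1:ℝ) ^ m * (pcount m u : ℝ) = (g as).eval 0 := by linarith
      have hsqm : (-1:ℝ) ^ m * (-1:ℝ) ^ m = 1 := by
        rw [← pow_add]
        exact Even.neg_one_pow ⟨m, rfl⟩
      rw [← hPG, ← mul_assoc, hsqm, one_mul]

lemma coe_list_eq {n : ℕ} (u : Fin n → ℕ) :
    (List.ofFn u).map (fun k => (k : ℝ)) = List.map (fun k : ℕ => (k : ℝ)) (List.ofFn u) := by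
  induction (List.ofFn u) with
  | nil => rfl
  | cons a l ih =>
    simp_all [List.flatMap_cons]

end H

/-- The number of `u`-parking functions of length `m` equals `(-1)^m g_m(0; u₁,...,uₘ)`,
where `g` is the family of Goncarov polynomials. -/
theorem parking_count_goncarov (g : List ℝ → Polynomial ℝ)
    (h0 : g [] = 1)
    (hD : ∀ (a : ℝ) (as : List ℝ),
      derivative (g (a :: as)) = ((as.length + 1 : ℕ) : ℝ) • g as)
    (hE : ∀ (a : ℝ) (as : List ℝ), (g (a :: as)).eval a = 0)
    (m : ℕ) (u : Fin m → ℕ) (hu : StrictMono u) (hupos : ∀ i, 0 < u i) :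
    (Set.ncard {π : Fin m → ℕ | IsParkingFn u π} : ℝ) =
      (-1) ^ m * (g ((List.ofFn u).map (fun k => (k : ℝ)))).eval 0 := by
  rw [ncard_eq_pcount, coe_list_eq]
  exact main_formula g h0 hD hE m u hu hupos
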